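/- arXiv:2509.25925 — 3 statements merged into one kernel-verified Lean document; each statement's English description precedes it below -/
import Mathlib

section
/- For every t, q, s ≥ 1 and cycle lengths k_1, …, k_{t−1} ≥ 3, the graphs G_1 = K_1 ∨ (C_3 ∪ C_{k_1} ∪ C_{k_2} ∪ ⋯ ∪ C_{k_{t−1}} ∪ qK_2 ∪ sK_1) and G_2 = K_1 ∨ (K_{1,3} ∪ C_{k_1} ∪ C_{k_2} ∪ ⋯ ∪ C_{k_{t−1}} ∪ qK_2 ∪ (s−1)K_1) are Q-cospectral and non-isomorphic; in particular, G_1 is not determined by its signless Laplacian spectrum (not DQS). -/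
open SimpleGraph Finset

namespace Paper

/-- The cone `K₁ ∨ G`: a new apex vertex (`none`) joined to every vertex of `G`. -/
def cone {V : Type*} (G : SimpleGraph V) : SimpleGraph (Option V) where
  Adj x y :=
    match x, y with
    | none, none => False
    | none, some _ => True
    | some _, none => True
    | some a, some b => G.Adj a b
  symm := by
    constructor
    rintro (_ | a) (_ | b) h
    · exact h
    · exact trivial
    · exact trivial
    · exact G.adj_symm h
  loopless := by
    constructor
    rintro (_ | a) h
    · exact h
    · exact G.loopless.irrefl a h

/-- Disjoint union of an indexed family of graphs. -/
def sigmaGraph {ι : Type*} {V : ι → Type*} (G : ∀ i, SimpleGraph (V i)) :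
    SimpleGraph (Σ i, V i) where
  Adj x y := ∃ (i : ι) (u v : V i), x = ⟨i, u⟩ ∧ y = ⟨i, v⟩ ∧ (G i).Adj u v
  symm := by
    constructor
    rintro x y ⟨i, u, v, rfl, rfl, h⟩
    exact ⟨i, v, u, rfl, rfl, (G i).adj_symm h⟩
  loopless := by
    constructor
    rintro x ⟨i, u, v, rfl, h2, h⟩
    injection h2 with h3 h4
    subst h4
    exact (G i).loopless.irrefl u h

/-- `q` disjoint copies of `K₂`. -/
def K2s (q : ℕ) : SimpleGraph (Σ _ : Fin q, Fin 2) :=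
  sigmaGraph fun _ => (⊤ : SimpleGraph (Fin 2))

/-- The signless Laplacian matrix `Q(G) = D(G) + A(G)`. -/
noncomputable def QMatrix {V : Type*} [Fintype V] (G : SimpleGraph V) : Matrix V V ℝ :=
  letI := Classical.decEq V
  letI := Classical.decRel G.Adj
  Matrix.diagonal (fun v => (G.degree v : ℝ)) + G.adjMatrix ℝ

/-- The signless Laplacian spectrum, as the multiset of roots of the characteristic
polynomial of `Q(G)` (with multiplicity). -/
noncomputable def Qspectrum {V : Type*} [Fintype V] (G : SimpleGraph V) : Multiset ℝ :=
  letI := Classical.decEq V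
  (QMatrix G).charpoly.roots

/-- Multiplicity of `ρ` as a signless Laplacian eigenvalue of `G`. -/
noncomputable def Qmult {V : Type*} [Fintype V] (G : SimpleGraph V) (ρ : ℝ) : ℕ :=
  (Qspectrum G).count ρ

/-- The `i`-th largest signless Laplacian eigenvalue (1-indexed), i.e. `χ_i(G)`. -/
noncomputable def Qeig {V : Type*} [Fintype V] (G : SimpleGraph V) (i : ℕ) : ℝ :=
  (((Qspectrum G).sort (· ≤ ·)).reverse).getD (i - 1) 0

/-- `G` is determined by its signless Laplacian spectrum. -/
def IsDQS {V : Type*} [Fintype V] (G : SimpleGraph V) : Prop :=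
  ∀ (W : Type) [Fintype W] (F : SimpleGraph W),
    Qspectrum F = Qspectrum G → Nonempty (F ≃g G)

/-- The number of subgraphs of `G` isomorphic to `H`. -/
noncomputable def subgraphCount {V W : Type*} (G : SimpleGraph V) (H : SimpleGraph W) : ℕ :=
  Nat.card {H' : G.Subgraph // Nonempty (H'.coe ≃g H)}

/-- The number of triangle subgraphs of `G` containing a vertex `v`. -/
noncomputable def triangleCountAt {V : Type*} (G : SimpleGraph V) (v : V) : ℕ :=
  Nat.card {H' : G.Subgraph //
    v ∈ H'.verts ∧ Nonempty (H'.coe ≃g (⊤ : SimpleGraph (Fin 3)))}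

/-- Vertex degree (with classical decidability). -/
noncomputable def deg {V : Type*} [Fintype V] (G : SimpleGraph V) (v : V) : ℕ :=
  letI := Classical.decRel G.Adj
  G.degree v

/-- The multiset of vertex degrees of `G`. -/
noncomputable def degreeMultiset {V : Type*} [Fintype V] (G : SimpleGraph V) : Multiset ℕ :=
  (Finset.univ : Finset V).val.map fun v => deg G v

/-- The maximum vertex degree of `G`. -/
noncomputable def maxDeg {V : Type*} [Fintype V] (G : SimpleGraph V) : ℕ :=
  letI := Classical.decRel G.Adj
  G.maxDegree

/-- `S_r(G) = trace(A(G)^r)`, the `r`-th spectral moment. -/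
noncomputable def Smoment {V : Type*} [Fintype V] (G : SimpleGraph V) (r : ℕ) : ℝ :=
  letI := Classical.decEq V
  letI := Classical.decRel G.Adj
  ((G.adjMatrix ℝ) ^ r).trace

/-- `T_r(G) = trace(Q(G)^r)`, the `r`-th signless Laplacian spectral moment. -/
noncomputable def Tmoment {V : Type*} [Fintype V] (G : SimpleGraph V) (r : ℕ) : ℝ :=
  letI := Classical.decEq V
  ((QMatrix G) ^ r).trace

/-- `∑_{uv ∈ E(G)} d_G(u) d_G(v)`. -/
noncomputable def edgeDegSum {V : Type*} [Fintype V] (G : SimpleGraph V) : ℕ :=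
  letI := Classical.decEq V
  letI := Classical.decRel G.Adj
  ∑ e ∈ G.edgeFinset,
    Sym2.lift ⟨fun u v => G.degree u * G.degree v, fun _ _ => Nat.mul_comm _ _⟩ e

/-- The coalescence of `G` at `v` with the apex of `K₁ ∨ r K₂`: add `2r` new vertices
`a_i, b_i` and edges `a_i b_i`, `v a_i`, `v b_i`. -/
def coalescenceK2s {V : Type*} (G : SimpleGraph V) (v : V) (r : ℕ) :
    SimpleGraph (V ⊕ (Fin r × Fin 2)) where
  Adj x y :=
    match x, y with
    | Sum.inl a, Sum.inl b => G.Adj a b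
    | Sum.inl a, Sum.inr _ => a = v
    | Sum.inr _, Sum.inl b => b = v
    | Sum.inr p, Sum.inr p' => p.1 = p'.1 ∧ p.2 ≠ p'.2
  symm := by
    constructor
    rintro (a | p) (b | p') h
    · exact G.adj_symm h
    · exact h
    · exact h
    · exact ⟨h.1.symm, h.2.symm⟩
  loopless := by
    constructor
    rintro (a | p) h
    · exact G.loopless.irrefl a h
    · exact h.2 rfl


/-- `K₁ ∨ (C_{k 0} ∪ ⋯ ∪ C_{k (t-1)} ∪ q K₂ ∪ s K₁)`. -/
def coneCycles {t : ℕ} (k : Fin t → ℕ) (q s : ℕ) :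
    SimpleGraph (Option ((Σ i, Fin (k i)) ⊕ ((Σ _ : Fin q, Fin 2) ⊕ Fin s))) :=
  cone ((sigmaGraph fun i => cycleGraph (k i)) ⊕g (K2s q ⊕g (⊥ : SimpleGraph (Fin s))))

/-- `K₁ ∨ (C_k ∪ q K₂ ∪ s K₁)`. -/
def coneOneCycle (k q s : ℕ) :
    SimpleGraph (Option (Fin k ⊕ ((Σ _ : Fin q, Fin 2) ⊕ Fin s))) :=
  cone (cycleGraph k ⊕g (K2s q ⊕g (⊥ : SimpleGraph (Fin s))))

/-- `K₁ ∨ (C₄ ∪ P_{k-3} ∪ P₃ ∪ (q-2) K₂ ∪ s K₁)`. -/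
def coneAlt (k q s : ℕ) :
    SimpleGraph (Option (Fin 4 ⊕ (Fin (k - 3) ⊕ (Fin 3 ⊕ ((Σ _ : Fin (q - 2), Fin 2) ⊕ Fin s))))) :=
  cone (cycleGraph 4 ⊕g (pathGraph (k - 3) ⊕g (pathGraph 3 ⊕g
    (K2s (q - 2) ⊕g (⊥ : SimpleGraph (Fin s))))))

/-- `K₁ ∨ (C₃ ∪ C_{k 0} ∪ ⋯ ∪ C_{k (t'-1)} ∪ q K₂ ∪ s K₁)`. -/
def coneC3Cycles {t' : ℕ} (k : Fin t' → ℕ) (q s : ℕ) :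
    SimpleGraph (Option (Fin 3 ⊕ ((Σ i, Fin (k i)) ⊕ ((Σ _ : Fin q, Fin 2) ⊕ Fin s)))) :=
  cone (cycleGraph 3 ⊕g ((sigmaGraph fun i => cycleGraph (k i)) ⊕g
    (K2s q ⊕g (⊥ : SimpleGraph (Fin s)))))

/-- `K₁ ∨ (K_{1,3} ∪ C_{k 0} ∪ ⋯ ∪ C_{k (t'-1)} ∪ q K₂ ∪ s' K₁)`. -/
def coneStar {t' : ℕ} (k : Fin t' → ℕ) (q s' : ℕ) :
    SimpleGraph (Option ((Fin 1 ⊕ Fin 3) ⊕ ((Σ i, Fin (k i)) ⊕ ((Σ _ : Fin q, Fin 2) ⊕ Fin s')))) :=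
  cone (completeBipartiteGraph (Fin 1) (Fin 3) ⊕g ((sigmaGraph fun i => cycleGraph (k i)) ⊕g
    (K2s q ⊕g (⊥ : SimpleGraph (Fin s')))))

/-- `K₁ ∨ (P_{l 0} ∪ ⋯ ∪ P_{l (q-1)} ∪ s K₁)`. -/
def conePaths {q : ℕ} (l : Fin q → ℕ) (s : ℕ) :
    SimpleGraph (Option ((Σ i, Fin (l i)) ⊕ Fin s)) :=
  cone ((sigmaGraph fun i => pathGraph (l i)) ⊕g (⊥ : SimpleGraph (Fin s)))

/-- `K₁ ∨ (C_{k 0} ∪ ⋯ ∪ C_{k (z-1)} ∪ P_{l 0} ∪ ⋯ ∪ P_{l (q-1)} ∪ s K₁)`. -/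
def coneCyclesPaths {z q : ℕ} (k : Fin z → ℕ) (l : Fin q → ℕ) (s : ℕ) :
    SimpleGraph (Option ((Σ i, Fin (k i)) ⊕ ((Σ i, Fin (l i)) ⊕ Fin s))) :=
  cone ((sigmaGraph fun i => cycleGraph (k i)) ⊕g
    ((sigmaGraph fun i => pathGraph (l i)) ⊕g (⊥ : SimpleGraph (Fin s))))

/-- The quartic polynomial `p_{n,q,s}` from the paper. -/
noncomputable def quartic (n q s : ℕ) (x : ℝ) : ℝ :=
  x ^ 4 - ((n : ℝ) + 8) * x ^ 3 + (8 * (n : ℝ) + 15) * x ^ 2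
    + (4 * (q : ℝ) + 4 * (s : ℝ) - 19 * (n : ℝ) + 4) * x
    + (12 * (n : ℝ) - 4 * (q : ℝ) - 12 * (s : ℝ) - 12)

/-- The multiset `{3 + 2 cos (2jπ/k_i) : 1 ≤ j ≤ k_i - 1, 1 ≤ i ≤ t}`. -/
noncomputable def cycleEigs {t : ℕ} (k : Fin t → ℕ) : Multiset ℝ :=
  ∑ i : Fin t, (Multiset.range (k i - 1)).map
    (fun j => 3 + 2 * Real.cos (2 * ((j : ℝ) + 1) * Real.pi / (k i : ℝ)))


/-!
Write `R = C_{k₁} ∪ ⋯ ∪ C_{k_{t-1}} ∪ qK₂ ∪ (s-1)K₁`. Up to isomorphism `G₁ = K₁ ∨ ((K₁ ∪ C₃) ∪ R)`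
and `G₂ = K₁ ∨ (K_{1,3} ∪ R)`. Listing the vertices of `K₁ ∪ C₃` and of `K_{1,3}` as
(isolated vertex, triangle) and (centre, leaves), their signless Laplacians are conjugate by the
Householder reflection `U` in `v = (-3, 1, 1, 1)`. As `v ⟂ 𝟙`, `U` fixes the all-ones vector, which
is all that the apex of the cone sees of the four switched vertices; so `U ⊕ I` conjugates `Q(G₁)`
into `Q(G₂)`. The graphs are not isomorphic: in `G₂` the apex and the centre of the star have
degree at least `4`, while in `G₁` every vertex other than the apex has degree at most `3`.
-/

section Degree

variable {V W : Type*}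

@[simp] lemma cone_adj_none_none (G : SimpleGraph V) : ¬ (cone G).Adj none none := id
@[simp] lemma cone_adj_none_some (G : SimpleGraph V) (v : V) : (cone G).Adj none (some v) := trivial
@[simp] lemma cone_adj_some_none (G : SimpleGraph V) (v : V) : (cone G).Adj (some v) none := trivial
@[simp] lemma cone_adj_some_some (G : SimpleGraph V) (v w : V) :
    (cone G).Adj (some v) (some w) ↔ G.Adj v w := Iff.rfl

variable [Fintype V] [Fintype W]

open Classical in
lemma deg_eq_sum (G : SimpleGraph V) (v : V) : deg G v = ∑ w, if G.Adj v w then 1 else 0 := by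
  rw [deg, degree, neighborFinset_eq_filter, card_filter]

lemma deg_cone_none (G : SimpleGraph V) : deg (cone G) none = Fintype.card V := by
  classical
  rw [deg_eq_sum, Fintype.sum_option]
  simp

lemma deg_cone_some (G : SimpleGraph V) (v : V) : deg (cone G) (some v) = deg G v + 1 := by
  classical
  rw [deg_eq_sum, deg_eq_sum, Fintype.sum_option]
  simp [add_comm]

@[simp]
lemma deg_sum_inl (G : SimpleGraph V) (H : SimpleGraph W) (v : V) :
    deg (G ⊕g H) (.inl v) = deg G v := by
  classical
  rw [deg_eq_sum, deg_eq_sum, Fintype.sum_sum_type]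
  simp

@[simp]
lemma deg_sum_inr (G : SimpleGraph V) (H : SimpleGraph W) (w : W) :
    deg (G ⊕g H) (.inr w) = deg H w := by
  classical
  rw [deg_eq_sum, deg_eq_sum, Fintype.sum_sum_type]
  simp

lemma deg_sigmaGraph {ι : Type*} [Fintype ι] {Vs : ι → Type*} [∀ i, Fintype (Vs i)]
    (G : ∀ i, SimpleGraph (Vs i)) (i : ι) (u : Vs i) :
    deg (sigmaGraph G) ⟨i, u⟩ = deg (G i) u := by
  classical
  have hadj : ∀ j (v : Vs j),
      (sigmaGraph G).Adj ⟨i, u⟩ ⟨j, v⟩ ↔ ∃ h : i = j, (G j).Adj (h ▸ u) v := by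
    intro j v
    constructor
    · rintro ⟨l, a, b, h1, h2, hab⟩
      cases h1; cases h2
      exact ⟨rfl, hab⟩
    · rintro ⟨rfl, h⟩
      exact ⟨i, u, v, rfl, rfl, h⟩
  rw [deg_eq_sum, deg_eq_sum, ← univ_sigma_univ, sum_sigma, sum_eq_single i]
  · simp [hadj]
  · intro j _ hj
    exact sum_eq_zero fun v _ => by simp [hadj, Ne.symm hj]
  · simp

@[simp]
lemma deg_bot (v : V) : deg (⊥ : SimpleGraph V) v = 0 := by
  classical
  simp [deg_eq_sum]

lemma deg_top (v : V) : deg (⊤ : SimpleGraph V) v = Fintype.card V - 1 := by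
  classical
  rw [deg]
  convert complete_graph_degree v

lemma deg_completeBipartiteGraph_inl (v : V) :
    deg (completeBipartiteGraph V W) (.inl v) = Fintype.card W := by
  classical
  rw [deg_eq_sum, Fintype.sum_sum_type]
  simp

lemma deg_completeBipartiteGraph_inr (w : W) :
    deg (completeBipartiteGraph V W) (.inr w) = Fintype.card V := by
  classical
  rw [deg_eq_sum, Fintype.sum_sum_type]
  simp

lemma deg_cycleGraph_le (n : ℕ) (v : Fin n) : deg (cycleGraph n) v ≤ 2 := by
  classical
  match n, v with
  | 1, v => simp [cycleGraph_one_eq_bot]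
  | n + 2, v =>
    unfold deg
    refine (?_ : _ = #({v - 1, v + 1} : Finset _)).trans_le card_le_two
    convert cycleGraph_degree_two_le

lemma deg_iso {G : SimpleGraph V} {H : SimpleGraph W} (φ : G ≃g H) (v : V) :
    deg H (φ v) = deg G v := by
  classical
  unfold deg
  convert φ.degree_eq v

end Degree

section QMatrix

variable {V W : Type*} [Fintype V] [Fintype W]

open Classical in
lemma QMatrix_apply (G : SimpleGraph V) (v w : V) :
    QMatrix G v w = (if v = w then (deg G v : ℝ) else 0) + if G.Adj v w then 1 else 0 := by
  simp only [QMatrix, deg, Matrix.add_apply, Matrix.diagonal_apply, adjMatrix_apply]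

lemma QMatrix_submatrix_iso {G : SimpleGraph V} {H : SimpleGraph W} (φ : G ≃g H) :
    (QMatrix H).submatrix φ φ = QMatrix G := by
  classical
  ext v w
  simp [QMatrix_apply, deg_iso, Iso.map_adj_iff]

lemma Qspectrum_eq_roots_charpoly_submatrix [DecidableEq W] (G : SimpleGraph V) (e : W ≃ V) :
    Qspectrum G = ((QMatrix G).submatrix e e).charpoly.roots := by
  classical
  rw [Qspectrum, ← Matrix.charpoly_reindex e.symm]
  rfl

lemma Qspectrum_eq_of_iso {G : SimpleGraph V} {H : SimpleGraph W} (φ : G ≃g H) :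
    Qspectrum G = Qspectrum H := by
  classical
  rw [Qspectrum_eq_roots_charpoly_submatrix H φ.toEquiv, RelIso.coe_fn_toEquiv,
    QMatrix_submatrix_iso, Qspectrum]

lemma QMatrix_sum (G : SimpleGraph V) (H : SimpleGraph W) :
    QMatrix (G ⊕g H) = Matrix.fromBlocks (QMatrix G) 0 0 (QMatrix H) := by
  classical
  ext (v | w) (v' | w') <;> simp [QMatrix_apply]

lemma QMatrix_cone [DecidableEq V] (G : SimpleGraph V) :
    (QMatrix (cone G)).submatrix (Equiv.optionEquivSumPUnit.{0} V).symm
        (Equiv.optionEquivSumPUnit.{0} V).symm =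
      Matrix.fromBlocks (QMatrix G + 1) (Matrix.replicateCol _ 1) (Matrix.replicateRow _ 1)
        (Matrix.of fun _ _ => (Fintype.card V : ℝ)) := by
  classical
  ext (v | _) (w | _)
  · by_cases h : v = w <;> simp [QMatrix_apply, deg_cone_some, h]
  all_goals simp [QMatrix_apply, deg_cone_none]

lemma QMatrix_bot : QMatrix (⊥ : SimpleGraph V) = 0 := by
  classical
  ext v w
  simp [QMatrix_apply]

lemma QMatrix_top [DecidableEq V] :
    QMatrix (⊤ : SimpleGraph V) =
      Matrix.of fun i j => if i = j then ((Fintype.card V - 1 : ℕ) : ℝ) else 1 := by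
  classical
  ext i j
  by_cases h : i = j <;> simp [QMatrix_apply, deg_top, h]

lemma QMatrix_completeBipartiteGraph [DecidableEq V] [DecidableEq W] :
    QMatrix (completeBipartiteGraph V W) =
      Matrix.fromBlocks ((Fintype.card W : ℝ) • 1) (Matrix.of fun _ _ => 1)
        (Matrix.of fun _ _ => 1) ((Fintype.card V : ℝ) • 1) := by
  classical
  ext (v | w) (v' | w') <;>
    simp [QMatrix_apply, deg_completeBipartiteGraph_inl, deg_completeBipartiteGraph_inr,
      Matrix.one_apply]

end QMatrix

section Switching

open Matrix

variable {m n : Type*} [Fintype m] [Fintype n] [DecidableEq m] [DecidableEq n]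

lemma charpoly_fromBlocks_conj_eq {R : Type*} [CommRing R] (U : Matrix m m R) (hU : U * U = 1)
    (A : Matrix m m R) (B : Matrix m n R) (C : Matrix n m R) (D : Matrix n n R)
    (hB : U * B = B) (hC : C * U = C) :
    (fromBlocks (U * A * U) B C D).charpoly = (fromBlocks A B C D).charpoly := by
  let P : Matrix (m ⊕ n) (m ⊕ n) R := fromBlocks U 0 0 1
  have hP : P * P = 1 := by simp [P, fromBlocks_multiply, hU]
  have hconj : fromBlocks (U * A * U) B C D = P * fromBlocks A B C D * P := by
    simp [P, fromBlocks_multiply, hB, hC]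
  rw [hconj]
  have := charpoly_units_conj (⟨P, P, hP, hP⟩ : (Matrix (m ⊕ n) (m ⊕ n) R)ˣ) (fromBlocks A B C D)
  rwa [Units.val_mk, inv_eq_left_inv hP] at this

variable {K : Type*} [Field K]

noncomputable def householder (v : m → K) : Matrix m m K :=
  1 - (2 / (v ⬝ᵥ v)) • vecMulVec v v

lemma householder_mul_self {v : m → K} (hv : v ⬝ᵥ v ≠ 0) :
    householder v * householder v = 1 := by
  have hsq : vecMulVec v v * vecMulVec v v = (v ⬝ᵥ v) • vecMulVec v v := by
    rw [vecMulVec_mul_vecMulVec]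
    ext i j
    simp [vecMulVec_apply, mul_left_comm]
  rw [householder, sub_mul, mul_sub, mul_sub, one_mul, mul_one, smul_mul_smul_comm, hsq,
    smul_smul]
  have hcoeff : 2 / (v ⬝ᵥ v) * (2 / (v ⬝ᵥ v)) * (v ⬝ᵥ v) = 2 / (v ⬝ᵥ v) + 2 / (v ⬝ᵥ v) := by
    field_simp
    ring
  rw [hcoeff, add_smul]
  simp only [one_mul]
  abel

lemma householder_mulVec {v w : m → K} (h : v ⬝ᵥ w = 0) : householder v *ᵥ w = w := by
  simp [householder, sub_mulVec, smul_mulVec, vecMulVec_mulVec, h]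

lemma vecMul_householder {v w : m → K} (h : w ⬝ᵥ v = 0) : w ᵥ* householder v = w := by
  simp [householder, vecMul_sub, vecMul_smul, vecMul_vecMulVec, h]

end Switching

open Matrix in
theorem Qspectrum_cone_sum_eq_of_conj {X W : Type*} [Fintype X] [Fintype W] [DecidableEq X]
    {L₁ L₂ : SimpleGraph X} (R : SimpleGraph W) (U : Matrix X X ℝ) (hUU : U * U = 1)
    (hU1 : U *ᵥ 1 = 1) (h1U : 1 ᵥ* U = 1) (hQ : U * QMatrix L₁ * U = QMatrix L₂) :
    Qspectrum (cone (L₁ ⊕g R)) = Qspectrum (cone (L₂ ⊕g R)) := by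
  classical
  let e := (Equiv.optionEquivSumPUnit.{0} (X ⊕ W)).symm
  rw [Qspectrum_eq_roots_charpoly_submatrix _ e, Qspectrum_eq_roots_charpoly_submatrix _ e,
    QMatrix_cone, QMatrix_cone, QMatrix_sum, QMatrix_sum]
  let U' : Matrix (X ⊕ W) (X ⊕ W) ℝ := fromBlocks U 0 0 1
  have hblock : fromBlocks (QMatrix L₂) 0 0 (QMatrix R) + 1 =
      U' * (fromBlocks (QMatrix L₁) 0 0 (QMatrix R) + 1) * U' := by
    simp [U', ← fromBlocks_one, fromBlocks_add, fromBlocks_multiply, mul_add, add_mul, hUU, ← hQ,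
      Matrix.mul_assoc]
  rw [hblock, charpoly_fromBlocks_conj_eq]
  · simp [U', fromBlocks_multiply, hUU]
  · rw [← replicateCol_mulVec, fromBlocks_mulVec]
    simp [hU1]
  · rw [← replicateRow_vecMul, vecMul_fromBlocks]
    simp [h1U]

section TriangleStarSwitching

open Matrix

def switchingVector : Fin 1 ⊕ Fin 3 → ℝ := Sum.elim (fun _ => -3) fun _ => 1

lemma switchingVector_dotProduct_self : switchingVector ⬝ᵥ switchingVector = 12 := by
  norm_num [switchingVector, dotProduct, Fintype.sum_sum_type]

lemma switchingVector_dotProduct_one : switchingVector ⬝ᵥ 1 = 0 := by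
  norm_num [switchingVector, dotProduct, Fintype.sum_sum_type]

lemma householder_switchingVector_conj :
    householder switchingVector * QMatrix ((⊥ : SimpleGraph (Fin 1)) ⊕g cycleGraph 3) *
        householder switchingVector =
      QMatrix (completeBipartiteGraph (Fin 1) (Fin 3)) := by
  rw [QMatrix_sum, QMatrix_bot, cycleGraph_three_eq_top, QMatrix_top,
    QMatrix_completeBipartiteGraph, householder, switchingVector_dotProduct_self]
  ext (i | i) (j | j) <;> fin_cases i <;> fin_cases j <;>
    simp [mul_apply, Fintype.sum_sum_type, Fin.sum_univ_three, vecMulVec_apply, switchingVector,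
      one_apply] <;> norm_num

end TriangleStarSwitching

theorem Qspectrum_cone_triangle_eq_cone_star {W : Type*} [Fintype W] (R : SimpleGraph W) :
    Qspectrum (cone (((⊥ : SimpleGraph (Fin 1)) ⊕g cycleGraph 3) ⊕g R)) =
      Qspectrum (cone (completeBipartiteGraph (Fin 1) (Fin 3) ⊕g R)) :=
  Qspectrum_cone_sum_eq_of_conj R _
    (householder_mul_self (by norm_num [switchingVector_dotProduct_self]))
    (householder_mulVec switchingVector_dotProduct_one)
    (vecMul_householder (by rw [dotProduct_comm, switchingVector_dotProduct_one]))
    householder_switchingVector_conj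

section Isomorphism

variable {V W : Type*}

def coneCongr {G : SimpleGraph V} {H : SimpleGraph W} (φ : G ≃g H) : cone G ≃g cone H where
  toEquiv := Equiv.optionCongr φ.toEquiv
  map_rel_iff' := by
    rintro (_ | v) (_ | w) <;> simp [Iso.map_adj_iff]

def botSuccIso (s : ℕ) :
    (⊥ : SimpleGraph (Fin (s + 1))) ≃g (⊥ : SimpleGraph (Fin s)) ⊕g (⊥ : SimpleGraph (Fin 1)) where
  toEquiv := finSumFinEquiv.symm
  map_rel_iff' := by
    intro a b
    rcases finSumFinEquiv.symm a with a | a <;> rcases finSumFinEquiv.symm b with b | b <;> simp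

variable {α β γ : Type*}

def extractIsolatedVertexIso (A : SimpleGraph α) (B : SimpleGraph β) (C : SimpleGraph γ)
    (s : ℕ) :
    A ⊕g (B ⊕g (C ⊕g (⊥ : SimpleGraph (Fin (s + 1))))) ≃g
      ((⊥ : SimpleGraph (Fin 1)) ⊕g A) ⊕g (B ⊕g (C ⊕g (⊥ : SimpleGraph (Fin s)))) :=
  (Iso.refl.sumCongr (Iso.refl.sumCongr (Iso.refl.sumCongr (botSuccIso s)))).trans <|
    (Iso.refl.sumCongr (Iso.refl.sumCongr Iso.sumAssoc.symm)).trans <|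
    (Iso.refl.sumCongr Iso.sumAssoc.symm).trans <|
    (Iso.refl.sumCongr Iso.sumComm).trans <|
    Iso.sumAssoc.symm.trans (Iso.sumComm.sumCongr Iso.refl)

end Isomorphism

theorem Qspectrum_coneC3Cycles_eq_coneStar {t : ℕ} (k : Fin t → ℕ) (q s : ℕ) :
    Qspectrum (coneC3Cycles k q (s + 1)) = Qspectrum (coneStar k q s) :=
  (Qspectrum_eq_of_iso (coneCongr (extractIsolatedVertexIso _ _ _ s))).trans
    (Qspectrum_cone_triangle_eq_cone_star _)

section NonIsomorphism

variable {V W : Type*} [Fintype V] [Fintype W]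

lemma deg_lt_card (G : SimpleGraph V) (v : V) : deg G v < Fintype.card V := by
  classical
  unfold deg
  convert G.degree_lt_card_verts v

lemma eq_none_of_four_le_deg_cone {H : SimpleGraph V} (hH : ∀ v, deg H v ≤ 2) {x : Option V}
    (hx : 4 ≤ deg (cone H) x) : x = none := by
  rcases x with _ | v
  · rfl
  · have := hH v
    rw [deg_cone_some] at hx
    omega

theorem isEmpty_cone_iso_cone_of_deg_le_two {H₁ : SimpleGraph V} {H₂ : SimpleGraph W}
    (hH₁ : ∀ v, deg H₁ v ≤ 2) (c : W) (hc : 3 ≤ deg H₂ c) : IsEmpty (cone H₁ ≃g cone H₂) := by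
  refine ⟨fun φ => ?_⟩
  have hapex : 4 ≤ deg (cone H₂) none := by
    have := deg_lt_card H₂ c
    rw [deg_cone_none]
    omega
  have hcentre : 4 ≤ deg (cone H₂) (some c) := by
    rw [deg_cone_some]
    omega
  rw [← φ.apply_symm_apply none, deg_iso] at hapex
  rw [← φ.apply_symm_apply (some c), deg_iso] at hcentre
  have := φ.symm.injective ((eq_none_of_four_le_deg_cone hH₁ hapex).trans
    (eq_none_of_four_le_deg_cone hH₁ hcentre).symm)
  exact Option.some_ne_none c this.symm

lemma not_isDQS_of_Qspectrum_eq {W : Type} [Fintype W] {G : SimpleGraph V} {H : SimpleGraph W}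
    (hspec : Qspectrum G = Qspectrum H) (hiso : IsEmpty (G ≃g H)) : ¬ IsDQS G :=
  fun hG => hiso.false (hG W H hspec.symm).some.symm

end NonIsomorphism

theorem isEmpty_coneC3Cycles_iso_coneStar {t : ℕ} (k : Fin t → ℕ) (q s s' : ℕ) :
    IsEmpty (coneC3Cycles k q s ≃g coneStar k q s') := by
  refine isEmpty_cone_iso_cone_of_deg_le_two ?_ (.inl (.inl 0))
    (by simp [deg_completeBipartiteGraph_inl])
  rintro (v | ⟨i, u⟩ | ⟨j, u⟩ | v)
  · simpa using deg_cycleGraph_le 3 v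
  · simpa [deg_sigmaGraph] using deg_cycleGraph_le (k i) u
  · simp [K2s, deg_sigmaGraph, deg_top]
  · simp

theorem cone_C3_cycles_not_DQS_general
    (t q s : ℕ) (hs : 1 ≤ s)
    (k : Fin (t - 1) → ℕ) :
    Qspectrum (coneC3Cycles k q s) = Qspectrum (coneStar k q (s - 1)) ∧
    IsEmpty (coneC3Cycles k q s ≃g coneStar k q (s - 1)) ∧
    ¬ IsDQS (coneC3Cycles k q s) := by
  obtain ⟨s, rfl⟩ := Nat.exists_eq_add_of_le' hs
  rw [Nat.add_sub_cancel]
  have hspec := Qspectrum_coneC3Cycles_eq_coneStar k q s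
  have hiso := isEmpty_coneC3Cycles_iso_coneStar k q (s + 1) s
  exact ⟨hspec, hiso, not_isDQS_of_Qspectrum_eq hspec hiso⟩

/-- Theorem 1.3: `K₁ ∨ (C₃ ∪ C_{k₁} ∪ ⋯ ∪ C_{k_{t-1}} ∪ q K₂ ∪ s K₁)` is `Q`-cospectral
with, but not isomorphic to, `K₁ ∨ (K_{1,3} ∪ C_{k₁} ∪ ⋯ ∪ C_{k_{t-1}} ∪ q K₂ ∪ (s-1) K₁)`;
in particular it is not DQS. -/
theorem cone_C3_cycles_not_DQS
    (t q s : ℕ) (ht : 1 ≤ t) (hq : 1 ≤ q) (hs : 1 ≤ s)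
    (k : Fin (t - 1) → ℕ) (hk : ∀ i, 3 ≤ k i) :
    Qspectrum (coneC3Cycles k q s) = Qspectrum (coneStar k q (s - 1)) ∧
    IsEmpty (coneC3Cycles k q s ≃g coneStar k q (s - 1)) ∧
    ¬ IsDQS (coneC3Cycles k q s) :=
  cone_C3_cycles_not_DQS_general t q s hs k

end Paper
end

section
/- Let G = K_1 ∨ (C_{k_1} ∪ C_{k_2} ∪ ⋯ ∪ C_{k_t} ∪ qK_2 ∪ sK_1) with t, q, s ≥ 1 and k_i ≥ 3 for 1 ≤ i ≤ t, and let n be the order of G. Then the number of subgraphs of G isomorphic to the path P_3 on three vertices is ς_G(P_3) = 3(n − 1 − s) − 4q + C(n−1, 2), where C(n−1, 2) = (n−1)(n−2)/2 is the binomial coefficient. -/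
/-!
A copy of `P₃` in a graph is determined by its centre `v` and its unordered pair of leaves, a
2-subset of the neighbourhood of `v`; hence `ς_G(P₃) = ∑_v C(d(v), 2)`. In
`K₁ ∨ (C_{k_1} ∪ ⋯ ∪ C_{k_t} ∪ qK₂ ∪ sK₁)` the apex has degree `n - 1`, and every other vertex
has degree one more than in the union: `3` on the cycles, `2` on the `K₂`s and `1` on the isolated
vertices, so `ς_G(P₃) = C(n - 1, 2) + 3(n - 1 - s - 2q) + 2q`.
-/

open SimpleGraph Finset

open Function

namespace SimpleGraph
variable {V W : Type*}

section Cherry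
variable (G : SimpleGraph V)

def cherry (v : V) (s : Set V) : G.Subgraph where
  verts := insert v s
  Adj x y := G.Adj x y ∧ (x = v ∧ y ∈ s ∨ y = v ∧ x ∈ s)
  adj_sub h := h.1
  edge_vert := by
    rintro x y ⟨-, ⟨rfl, -⟩ | ⟨-, hx⟩⟩
    · exact Set.mem_insert x _
    · exact Set.mem_insert_of_mem v hx
  symm := ⟨fun _ _ h => ⟨h.1.symm, h.2.symm⟩⟩

variable {G}

theorem Copy.toSubgraph_pathGraph_three (f : Copy (pathGraph 3) G) :
    f.toSubgraph = G.cherry (f 1) {f 0, f 2} := by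
  ext x y
  · simp [cherry, Fin.exists_fin_succ, eq_comm, or_left_comm (a := x = f 0)]
  · simp only [Subgraph.map_adj, Relation.Map, Subgraph.top_adj, cherry]
    constructor
    · rintro ⟨a, b, hab, rfl, rfl⟩
      refine ⟨f.toHom.map_adj hab, ?_⟩
      fin_cases a <;> fin_cases b <;> simp_all [pathGraph_adj]
    · rintro ⟨-, ⟨rfl, rfl | rfl⟩ | ⟨rfl, rfl | rfl⟩⟩
      exacts [⟨1, 0, by simp [pathGraph_adj], rfl, rfl⟩, ⟨1, 2, by simp [pathGraph_adj], rfl, rfl⟩,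
        ⟨0, 1, by simp [pathGraph_adj], rfl, rfl⟩, ⟨2, 1, by simp [pathGraph_adj], rfl, rfl⟩]

theorem cherry_adj_center {v y : V} {s : Set V} (hs : s ⊆ G.neighborSet v) :
    (G.cherry v s).Adj v y ↔ y ∈ s := by
  refine ⟨fun h => h.2.elim (·.2) fun h' => ?_, fun hy => ⟨hs hy, .inl ⟨rfl, hy⟩⟩⟩
  exact absurd (h'.1 ▸ h.1) (G.loopless.irrefl v)

theorem eq_and_eq_of_cherry_eq {v v' : V} {s s' : Set V} (hs : s ⊆ G.neighborSet v)
    (hs' : s' ⊆ G.neighborSet v') (hnt : s'.Nontrivial) (h : G.cherry v s = G.cherry v' s') :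
    v = v' ∧ s = s' := by
  obtain ⟨a, ha, b, hb, hab⟩ := hnt
  have hv : v' = v := by
    by_contra hne
    have hva : (G.cherry v s).Adj v' a := h ▸ (cherry_adj_center hs').2 ha
    have hvb : (G.cherry v s).Adj v' b := h ▸ (cherry_adj_center hs').2 hb
    obtain ⟨-, ⟨hv, -⟩ | ⟨rfl, -⟩⟩ := hva
    · exact hne hv
    obtain ⟨-, ⟨hv, -⟩ | ⟨hb, -⟩⟩ := hvb
    · exact hne hv
    · exact hab hb.symm
  subst hv
  refine ⟨rfl, Set.ext fun y => ?_⟩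
  rw [← cherry_adj_center hs, ← cherry_adj_center hs', h]

theorem exists_copy_pathGraph_three {v u w : V} (hu : G.Adj v u) (hw : G.Adj v w) (huw : u ≠ w) :
    ∃ f : Copy (pathGraph 3) G, f 0 = u ∧ f 1 = v ∧ f 2 = w := by
  refine ⟨⟨⟨![u, v, w], fun {a b} hab => ?_⟩, fun a b hab => ?_⟩, rfl, rfl, rfl⟩
  · fin_cases a <;> fin_cases b <;> simp_all [pathGraph_adj, hu.symm, hw.symm]
  · fin_cases a <;> fin_cases b <;> simp_all [hu.ne, hw.ne, hu.ne.symm, hw.ne.symm]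

theorem nonempty_cherry_iso_pathGraph_three {v u w : V} (hu : G.Adj v u) (hw : G.Adj v w)
    (huw : u ≠ w) : Nonempty ((G.cherry v {u, w}).coe ≃g pathGraph 3) := by
  obtain ⟨f, rfl, rfl, rfl⟩ := exists_copy_pathGraph_three hu hw huw
  exact ⟨f.toSubgraph_pathGraph_three ▸ f.isoToSubgraph.symm⟩

section Finite
variable [Fintype V] [DecidableRel G.Adj] {v : V} {e : Finset V}

theorem coe_subset_neighborSet_of_mem_powersetCard {k : ℕ}
    (he : e ∈ (G.neighborFinset v).powersetCard k) : (e : Set V) ⊆ G.neighborSet v :=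
  fun _ hx => (mem_neighborFinset G v _).1 ((mem_powersetCard.1 he).1 hx)

theorem nonempty_cherry_iso_pathGraph_three_of_mem
    (he : e ∈ (G.neighborFinset v).powersetCard 2) :
    Nonempty ((G.cherry v e).coe ≃g pathGraph 3) := by
  classical
  have hsub := coe_subset_neighborSet_of_mem_powersetCard he
  obtain ⟨u, w, huw, rfl⟩ := card_eq_two.1 (mem_powersetCard.1 he).2
  rw [coe_pair] at hsub ⊢
  exact nonempty_cherry_iso_pathGraph_three (hsub (by simp)) (hsub (by simp)) huw

theorem eq_and_eq_of_cherry_eq_of_mem {v' : V} {e' : Finset V}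
    (he : e ∈ (G.neighborFinset v).powersetCard 2) (he' : e' ∈ (G.neighborFinset v').powersetCard 2)
    (h : G.cherry v e = G.cherry v' e') : v = v' ∧ e = e' := by
  have hnt : (e' : Set V).Nontrivial :=
    one_lt_card_iff_nontrivial.1 (by rw [(mem_powersetCard.1 he').2]; decide)
  obtain ⟨rfl, hee⟩ := eq_and_eq_of_cherry_eq (coe_subset_neighborSet_of_mem_powersetCard he)
    (coe_subset_neighborSet_of_mem_powersetCard he') hnt h
  exact ⟨rfl, coe_injective hee⟩

theorem exists_cherry_eq_of_iso [DecidableEq V] {H : G.Subgraph} (φ : H.coe ≃g pathGraph 3) :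
    ∃ v, ∃ e ∈ (G.neighborFinset v).powersetCard 2, G.cherry v e = H := by
  obtain ⟨f, rfl⟩ : H ∈ Set.range Copy.toSubgraph := by
    rw [Copy.range_toSubgraph]; exact ⟨φ.symm⟩
  have h10 : G.Adj (f 1) (f 0) := f.toHom.map_adj (by simp [pathGraph_adj])
  have h12 : G.Adj (f 1) (f 2) := f.toHom.map_adj (by simp [pathGraph_adj])
  refine ⟨f 1, {f 0, f 2}, mem_powersetCard.2 ⟨?_, card_pair (f.injective.ne (by decide))⟩, ?_⟩
  · simp [insert_subset_iff, h10, h12]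
  · rw [coe_pair, f.toSubgraph_pathGraph_three]

theorem card_subgraph_iso_pathGraph_three :
    Nat.card {H : G.Subgraph // Nonempty (H.coe ≃g pathGraph 3)} =
      ∑ v, (G.degree v).choose 2 := by
  classical
  let toCherry (p : Σ v, (G.neighborFinset v).powersetCard 2) :
      {H : G.Subgraph // Nonempty (H.coe ≃g pathGraph 3)} :=
    ⟨G.cherry p.1 p.2, nonempty_cherry_iso_pathGraph_three_of_mem p.2.2⟩
  have hinj : Injective toCherry := by
    rintro ⟨v, e, he⟩ ⟨v', e', he'⟩ h
    obtain ⟨rfl, rfl⟩ := eq_and_eq_of_cherry_eq_of_mem he he' (congrArg Subtype.val h)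
    rfl
  have hsurj : Surjective toCherry := by
    rintro ⟨H, ⟨φ⟩⟩
    obtain ⟨v, e, he, rfl⟩ := exists_cherry_eq_of_iso φ
    exact ⟨⟨v, e, he⟩, rfl⟩
  rw [← Nat.card_congr (Equiv.ofBijective toCherry ⟨hinj, hsurj⟩), Nat.card_sigma]
  simp only [Nat.card_eq_fintype_card, Fintype.card_coe, card_powersetCard,
    card_neighborFinset_eq_degree]

end Finite

end Cherry

theorem degree_eq_of_neighborSet_eq_image {G : SimpleGraph V} {H : SimpleGraph W} {v : V} {w : W}
    [Fintype (G.neighborSet v)] [Fintype (H.neighborSet w)] {f : V → W} (hf : Injective f)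
    (h : H.neighborSet w = f '' G.neighborSet v) : H.degree w = G.degree v := by
  simp only [← card_neighborSet_eq_degree, Fintype.card_eq_nat_card, h,
    Nat.card_image_of_injective hf]

theorem degree_sum_inl {G : SimpleGraph V} {H : SimpleGraph W} (v : V)
    [Fintype (G.neighborSet v)] [Fintype ((G ⊕g H).neighborSet (.inl v))] :
    (G ⊕g H).degree (.inl v) = G.degree v :=
  degree_eq_of_neighborSet_eq_image Sum.inl_injective (neighborSet_sum_inl v)

theorem degree_sum_inr {G : SimpleGraph V} {H : SimpleGraph W} (w : W)
    [Fintype (H.neighborSet w)] [Fintype ((G ⊕g H).neighborSet (.inr w))] :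
    (G ⊕g H).degree (.inr w) = H.degree w :=
  degree_eq_of_neighborSet_eq_image Sum.inr_injective (neighborSet_sum_inr w)

theorem cycleGraph_degree_of_three_le {n : ℕ} (hn : 3 ≤ n) (v : Fin n)
    [Fintype ((cycleGraph n).neighborSet v)] : (cycleGraph n).degree v = 2 := by
  obtain ⟨m, rfl⟩ := Nat.exists_eq_add_of_le' hn
  convert cycleGraph_degree_three_le

end SimpleGraph

namespace Paper
variable {V : Type*}

theorem cone_neighborSet_none (G : SimpleGraph V) : (cone G).neighborSet none = Set.range some := by
  ext (_ | _) <;> simp [cone]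

theorem cone_neighborSet_some (G : SimpleGraph V) (a : V) :
    (cone G).neighborSet (some a) = insert none (some '' G.neighborSet a) := by
  ext (_ | _) <;> simp [cone]

theorem sigmaGraph_neighborSet {ι : Type*} {α : ι → Type*} (G : ∀ i, SimpleGraph (α i)) (i : ι)
    (u : α i) : (sigmaGraph G).neighborSet ⟨i, u⟩ = Sigma.mk i '' (G i).neighborSet u := by
  ext x
  constructor
  · rintro ⟨i', u', w, hu, rfl, h⟩
    obtain ⟨rfl, rfl⟩ := Sigma.mk.inj_iff.1 hu
    exact ⟨w, h, rfl⟩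
  · rintro ⟨w, h, rfl⟩
    exact ⟨i, u, w, rfl, rfl, h⟩

theorem degree_cone_none [Fintype V] (G : SimpleGraph V) [Fintype ((cone G).neighborSet none)] :
    (cone G).degree none = Fintype.card V := by
  rw [← card_neighborSet_eq_degree, Fintype.card_eq_nat_card, cone_neighborSet_none,
    Nat.card_range_of_injective (Option.some_injective V), Nat.card_eq_fintype_card]

theorem degree_cone_some (G : SimpleGraph V) (a : V) [Fintype (G.neighborSet a)]
    [Fintype ((cone G).neighborSet (some a))] :
    (cone G).degree (some a) = G.degree a + 1 := by
  simp only [← card_neighborSet_eq_degree, Fintype.card_eq_nat_card, cone_neighborSet_some,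
    Nat.card_coe_set_eq]
  rw [Set.ncard_insert_of_notMem (by simp),
    Set.ncard_image_of_injective _ (Option.some_injective V)]

theorem degree_sigmaGraph {ι : Type*} {α : ι → Type*} (G : ∀ i, SimpleGraph (α i)) (i : ι)
    (u : α i) [Fintype ((G i).neighborSet u)] [Fintype ((sigmaGraph G).neighborSet ⟨i, u⟩)] :
    (sigmaGraph G).degree ⟨i, u⟩ = (G i).degree u :=
  degree_eq_of_neighborSet_eq_image sigma_mk_injective (sigmaGraph_neighborSet G i u)

theorem degree_K2s (q : ℕ) (x : Σ _ : Fin q, Fin 2) [Fintype ((K2s q).neighborSet x)] :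
    (K2s q).degree x = 1 := by
  obtain ⟨i, u⟩ := x
  unfold K2s at *
  classical
  rw [degree_sigmaGraph, complete_graph_degree, Fintype.card_fin]

theorem sum_choose_two_degree_coneCycles {t : ℕ} (k : Fin t → ℕ) (q s : ℕ) (hk : ∀ i, 3 ≤ k i)
    [DecidableRel (coneCycles k q s).Adj] :
    ∑ v, ((coneCycles k q s).degree v).choose 2 =
      (∑ i, k i + 2 * q + s).choose 2 + (3 * ∑ i, k i + 2 * q) := by
  classical
  simp only [Fintype.sum_option, Fintype.sum_sum_type, Fintype.sum_sigma]
  unfold coneCycles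
  rw [degree_cone_none]
  simp only [degree_cone_some, degree_sum_inl, degree_sum_inr, degree_sigmaGraph, degree_K2s,
    cycleGraph_degree_of_three_le (hk _), bot_degree]
  simp [Fintype.card_sigma, mul_comm, ← sum_mul, add_assoc]

theorem subgraphCount_P3_coneCycles_general
    (t q s n : ℕ)
    (k : Fin t → ℕ) (hk : ∀ i, 3 ≤ k i)
    (hn : n = Fintype.card (Option ((Σ i, Fin (k i)) ⊕ ((Σ _ : Fin q, Fin 2) ⊕ Fin s)))) :
    (subgraphCount (coneCycles k q s) (pathGraph 3) : ℤ) =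
      3 * ((n : ℤ) - 1 - (s : ℤ)) - 4 * (q : ℤ) + ((n - 1).choose 2 : ℤ) := by
  classical
  have hn' : n = ∑ i, k i + 2 * q + s + 1 := by
    simp [hn, Fintype.card_sigma, mul_comm, add_assoc]
  rw [subgraphCount, card_subgraph_iso_pathGraph_three, sum_choose_two_degree_coneCycles k q s hk,
    hn', Nat.add_sub_cancel]
  push_cast
  ring

/-- Lemma 4.2 (i): the number of subgraphs of `G = K₁ ∨ (C_{k₁} ∪ ⋯ ∪ C_{k_t} ∪ q K₂ ∪ s K₁)`
isomorphic to `P₃` equals `3(n - 1 - s) - 4q + C(n-1, 2)`. -/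
theorem subgraphCount_P3_coneCycles
    (t q s n : ℕ) (ht : 1 ≤ t) (hq : 1 ≤ q) (hs : 1 ≤ s)
    (k : Fin t → ℕ) (hk : ∀ i, 3 ≤ k i)
    (hn : n = Fintype.card (Option ((Σ i, Fin (k i)) ⊕ ((Σ _ : Fin q, Fin 2) ⊕ Fin s)))) :
    (subgraphCount (coneCycles k q s) (pathGraph 3) : ℤ) =
      3 * ((n : ℤ) - 1 - (s : ℤ)) - 4 * (q : ℤ) + ((n - 1).choose 2 : ℤ) :=
  subgraphCount_P3_coneCycles_general t q s n k hk hn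

end Paper
end

section
/- Let G = K_1 ∨ (C_{k_1} ∪ C_{k_2} ∪ ⋯ ∪ C_{k_t} ∪ qK_2 ∪ sK_1) with t, q, s ≥ 1 and k_i ≥ 3 for 1 ≤ i ≤ t, and let n be the order of G. Then the number of subgraphs of G isomorphic to the 4-cycle C_4 is ς_G(C_4) = n − 2q − s − 1 + |{i : 1 ≤ i ≤ t, k_i = 4}|. In particular, if k_i ≠ 4 for all i, then ς_G(C_4) = n − 2q − s − 1. -/
open SimpleGraph Finset

theorem Set.pair_eq_pair_of_subset {α : Type*} {b d x y : α} (hbd : b ≠ d)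
    (h : ({b, d} : Set α) ⊆ {x, y}) : ({b, d} : Set α) = {x, y} := by
  simp only [Set.pair_subset_iff, Set.mem_insert_iff, Set.mem_singleton_iff] at h
  ext z
  simp only [Set.mem_insert_iff, Set.mem_singleton_iff]
  grind

namespace SimpleGraph

variable {V : Type*} {G : SimpleGraph V}

namespace Subgraph

def IsCompleteBipartiteWith (S : G.Subgraph) (s t : Set V) : Prop :=
  S.verts = s ∪ t ∧ ∀ x y, S.Adj x y ↔ x ∈ s ∧ y ∈ t ∨ x ∈ t ∧ y ∈ s

variable {S T : G.Subgraph} {s t : Set V}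

theorem IsCompleteBipartiteWith.symm (h : S.IsCompleteBipartiteWith s t) :
    S.IsCompleteBipartiteWith t s :=
  ⟨h.1.trans (Set.union_comm s t), fun x y => (h.2 x y).trans or_comm⟩

theorem IsCompleteBipartiteWith.eq (hS : S.IsCompleteBipartiteWith s t)
    (hT : T.IsCompleteBipartiteWith s t) : S = T := by
  ext x y
  · rw [hS.1, hT.1]
  · rw [hS.2, hT.2]

end Subgraph

theorem cycleGraph_four_adj_iff {x y : Fin 4} :
    (cycleGraph 4).Adj x y ↔ x ∈ ({0, 2} : Set (Fin 4)) ∧ y ∈ ({1, 3} : Set (Fin 4)) ∨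
      x ∈ ({1, 3} : Set (Fin 4)) ∧ y ∈ ({0, 2} : Set (Fin 4)) := by
  simp only [Set.mem_insert_iff, Set.mem_singleton_iff]
  revert x y
  decide

namespace Copy

theorem toSubgraph_isCompleteBipartiteWith (f : Copy (cycleGraph 4) G) :
    f.toSubgraph.IsCompleteBipartiteWith {f 0, f 2} {f 1, f 3} := by
  constructor
  · ext x
    simp only [Subgraph.map_verts, toHom_apply, Subgraph.verts_top, Set.image_univ, Set.mem_range,
      Fin.exists_fin_succ, Fin.isValue, Fin.succ_zero_eq_one, Fin.succ_one_eq_two, Fin.reduceSucc,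
      IsEmpty.exists_iff, or_false, Set.union_insert, Set.union_singleton, Set.mem_insert_iff,
      Set.mem_singleton_iff]
    tauto
  · intro x y
    simp only [Subgraph.map_adj, Relation.Map, Subgraph.top_adj, cycleGraph_four_adj_iff,
      Fin.isValue, Set.mem_insert_iff, Set.mem_singleton_iff, toHom_apply, Fin.exists_fin_succ,
      zero_ne_one, Fin.reduceEq, or_self, and_false, or_false, and_true, false_or, Fin.succ_ne_zero,
      Fin.succ_zero_eq_one, Fin.succ_one_eq_two, Fin.reduceSucc, or_true, IsEmpty.exists_iff,
      false_and, true_and]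
    grind

theorem toSubgraph_comp_iso {W : Type*} {A : SimpleGraph W} (f : Copy A G) (σ : A ≃g A) :
    (f.comp σ.toCopy).toSubgraph = f.toSubgraph := by
  ext x y
  · simp only [Subgraph.map_verts, Subgraph.verts_top, Set.image_univ]
    exact (σ.surjective.range_comp f).symm ▸ Iff.rfl
  · simp only [Subgraph.map_adj, Subgraph.top_adj, Relation.Map]
    constructor
    · rintro ⟨a, b, h, rfl, rfl⟩
      exact ⟨σ a, σ b, σ.map_adj_iff.2 h, rfl, rfl⟩
    · rintro ⟨a, b, h, rfl, rfl⟩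
      exact ⟨σ.symm a, σ.symm b, σ.symm.map_adj_iff.2 h, by simp [Copy.comp_apply],
        by simp [Copy.comp_apply]⟩

variable {a b c d : V}

def cycleGraphFour (hab : G.Adj a b) (hbc : G.Adj b c) (hcd : G.Adj c d) (hda : G.Adj d a)
    (hac : a ≠ c) (hbd : b ≠ d) : Copy (cycleGraph 4) G where
  toHom := ⟨![a, b, c, d], fun {x y} h => by
    fin_cases x <;> fin_cases y <;> first
      | exact absurd h (by decide)
      | assumption
      | exact Adj.symm ‹_›⟩
  injective' := by
    intro x y h
    fin_cases x <;> fin_cases y <;> first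
      | rfl
      | exact absurd h ‹_›
      | exact absurd h.symm ‹_›
      | exact absurd h (Adj.ne ‹_›)
      | exact absurd h.symm (Adj.ne ‹_›)

end Copy

theorem cycleGraph_neighborSet_eq_pair {n : ℕ} [NeZero n] (hn : 2 ≤ n) (j : Fin n) :
    (cycleGraph n).neighborSet j = {j - 1, j + 1} := by
  obtain ⟨m, rfl⟩ := Nat.exists_eq_add_of_le' hn
  exact cycleGraph_neighborSet

theorem cycleGraph_adj_add_one {n : ℕ} [NeZero n] (hn : 2 ≤ n) (j : Fin n) :
    (cycleGraph n).Adj j (j + 1) := by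
  rw [← mem_neighborSet, cycleGraph_neighborSet_eq_pair hn]
  exact Or.inr rfl

theorem cycleGraph_sub_one_adj {n : ℕ} [NeZero n] (hn : 2 ≤ n) (j : Fin n) :
    (cycleGraph n).Adj (j - 1) j := by
  simpa only [sub_add_cancel] using cycleGraph_adj_add_one hn (j - 1)

def cycleGraphFourRotate (m : Fin 4) : cycleGraph 4 ≃g cycleGraph 4 :=
  ⟨Equiv.addRight m, by revert m; decide⟩

open Fin.CommRing in
theorem cycleGraph_sub_one_ne_add_one {n : ℕ} [NeZero n] (hn : 3 ≤ n) (j : Fin n) :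
    j - 1 ≠ j + 1 := by
  intro h
  have h2 : ((2 : ℕ) : Fin n) = 0 := by push_cast; linear_combination -h
  have := Nat.le_of_dvd two_pos (Fin.natCast_eq_zero.1 h2)
  omega

open Fin.CommRing in
theorem cycleGraph_eq_four_of_neighborSet_eq {n : ℕ} (hn : 3 ≤ n) {j j' : Fin n}
    (hne : j ≠ j')
    (h : (cycleGraph n).neighborSet j = (cycleGraph n).neighborSet j') : n = 4 := by
  have : NeZero n := ⟨by omega⟩
  rw [cycleGraph_neighborSet_eq_pair (by omega), cycleGraph_neighborSet_eq_pair (by omega),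
    Set.pair_eq_pair_iff] at h
  rcases h with ⟨h, -⟩ | ⟨h1, h2⟩
  · exact absurd (sub_left_injective h) hne
  · have h4 : ((4 : ℕ) : Fin n) = 0 := by push_cast; linear_combination h2 - h1
    have hdvd := Fin.natCast_eq_zero.1 h4
    have := Nat.le_of_dvd four_pos hdvd
    interval_cases n
    · norm_num at hdvd
    · rfl

theorem cycleGraph_four_parts_of_neighborSet_eq {n : ℕ} (h : 4 = n) {j j' : Fin n}
    (hne : j ≠ j')
    (hN : (cycleGraph n).neighborSet j = (cycleGraph n).neighborSet j') :
    (({j, j'} : Set (Fin n)) = {Fin.cast h 0, Fin.cast h 2} ∧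
        (cycleGraph n).neighborSet j = {Fin.cast h 1, Fin.cast h 3}) ∨
      (({j, j'} : Set (Fin n)) = {Fin.cast h 1, Fin.cast h 3} ∧
        (cycleGraph n).neighborSet j = {Fin.cast h 0, Fin.cast h 2}) := by
  subst h
  simp only [Fin.cast_eq_self, cycleGraph_neighborSet, Set.pair_eq_pair_iff] at hN ⊢
  revert j j'
  decide

def cycleGraphCongr {m n : ℕ} (h : m = n) : cycleGraph m ≃g cycleGraph n :=
  ⟨finCongr h, by subst h; simp⟩

end SimpleGraph

namespace Paper

section

variable {V : Type*}

def coneEmbedding (G : SimpleGraph V) : G ↪g cone G := ⟨Function.Embedding.some, Iff.rfl⟩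

theorem exists_comp_coneEmbedding {W : Type*} {A : SimpleGraph W} {G : SimpleGraph V}
    (f : Copy A (cone G)) (hf : ∀ w, f w ≠ none) :
    ∃ f' : Copy A G, (coneEmbedding G).toCopy.comp f' = f := by
  choose g hg using fun w => Option.ne_none_iff_exists'.1 (hf w)
  refine ⟨⟨⟨g, fun {a b} h => ?_⟩, fun a b h => f.injective ?_⟩,
    Copy.ext fun w => (hg w).symm⟩
  · have := f.toHom.map_adj h
    rwa [Copy.coe_toHom, hg, hg] at this
  · rw [Copy.coe_toHom, hg, hg]
    exact congrArg some h

variable {ι : Type*} {W : ι → Type*} {G : ∀ i, SimpleGraph (W i)}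

theorem sigmaGraph_adj_mk_iff {i : ι} {u : W i} {y : Σ i, W i} :
    (sigmaGraph G).Adj ⟨i, u⟩ y ↔ ∃ v, y = ⟨i, v⟩ ∧ (G i).Adj u v := by
  constructor
  · rintro ⟨i', u', v, h, rfl, hadj⟩
    obtain ⟨rfl, rfl⟩ := Sigma.mk.inj_iff.1 h
    exact ⟨v, rfl, hadj⟩
  · rintro ⟨v, rfl, hadj⟩
    exact ⟨i, u, v, rfl, rfl, hadj⟩

theorem sigmaGraph_neighborSet_mk (i : ι) (u : W i) :
    (sigmaGraph G).neighborSet ⟨i, u⟩ = Sigma.mk i '' (G i).neighborSet u := by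
  ext y
  simp only [mem_neighborSet, sigmaGraph_adj_mk_iff, Set.mem_image]
  grind

def sigmaGraphEmbedding (G : ∀ i, SimpleGraph (W i)) (i : ι) : G i ↪g sigmaGraph G :=
  ⟨⟨Sigma.mk i, sigma_mk_injective⟩, by simp [sigmaGraph_adj_mk_iff]⟩

end

variable {t : ℕ} (k : Fin t → ℕ) (q s : ℕ)

abbrev coneCyclesBase : SimpleGraph ((Σ i, Fin (k i)) ⊕ ((Σ _ : Fin q, Fin 2) ⊕ Fin s)) :=
  (sigmaGraph fun i => cycleGraph (k i)) ⊕g (K2s q ⊕g (⊥ : SimpleGraph (Fin s)))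

def cycleEmbedding (i : Fin t) : cycleGraph (k i) ↪g coneCycles k q s :=
  (coneEmbedding _).comp 
    (Embedding.sumInl.comp (sigmaGraphEmbedding (fun i => cycleGraph (k i)) i))

@[simp]
theorem cycleEmbedding_apply (i : Fin t) (j : Fin (k i)) :
    cycleEmbedding k q s i j = some (.inl ⟨i, j⟩) := rfl

theorem coneCyclesBase_neighborSet_inl (i : Fin t) (j : Fin (k i)) :
    (coneCyclesBase k q s).neighborSet (.inl ⟨i, j⟩) =
      (fun x => .inl ⟨i, x⟩) '' (cycleGraph (k i)).neighborSet j := by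
  rw [neighborSet_sum_inl, sigmaGraph_neighborSet_mk, Set.image_image]

theorem coneCyclesBase_neighborSet_inr_subsingleton (p : (Σ _ : Fin q, Fin 2) ⊕ Fin s) :
    ((coneCyclesBase k q s).neighborSet (.inr p)).Subsingleton := by
  rcases p with ⟨i, u⟩ | x
  · rw [neighborSet_sum_inr, neighborSet_sum_inl, K2s, sigmaGraph_neighborSet_mk]
    refine (((Set.subsingleton_of_forall_eq (1 - u) ?_).image _).image _).image _
    intro v hv
    simp only [mem_neighborSet, top_adj] at hv
    omega
  · simp [neighborSet_sum_inr]

variable {k q s}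

theorem coneCyclesBase_neighborSet_eq_pair (hk : ∀ i, 3 ≤ k i)
    {b c d : (Σ i, Fin (k i)) ⊕ ((Σ _ : Fin q, Fin 2) ⊕ Fin s)}
    (hb : (coneCyclesBase k q s).Adj c b) (hd : (coneCyclesBase k q s).Adj c d) (hbd : b ≠ d) :
    ∃ i j, c = .inl ⟨i, j⟩ ∧ (coneCyclesBase k q s).neighborSet c = {b, d} := by
  rcases c with ⟨i, j⟩ | p
  · refine ⟨i, j, rfl, ?_⟩
    have : NeZero (k i) := ⟨by have := hk i; omega⟩
    have hN := coneCyclesBase_neighborSet_inl k q s i j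
    rw [cycleGraph_neighborSet_eq_pair (by have := hk i; omega), Set.image_pair] at hN
    rw [hN]
    refine (Set.pair_eq_pair_of_subset hbd ?_).symm
    rw [← hN, Set.pair_subset_iff]
    exact ⟨hb, hd⟩
  · exact absurd (coneCyclesBase_neighborSet_inr_subsingleton k q s p hb hd) hbd

theorem coneCyclesBase_eq_inl_of_common_neighbors (hk : ∀ i, 3 ≤ k i)
    {a b c d : (Σ i, Fin (k i)) ⊕ ((Σ _ : Fin q, Fin 2) ⊕ Fin s)}
    (hab : (coneCyclesBase k q s).Adj a b) (had : (coneCyclesBase k q s).Adj a d)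
    (hcb : (coneCyclesBase k q s).Adj c b) (hcd : (coneCyclesBase k q s).Adj c d)
    (hac : a ≠ c) (hbd : b ≠ d) :
    ∃ i j j', a = .inl ⟨i, j⟩ ∧ c = .inl ⟨i, j'⟩ ∧ j ≠ j' ∧
      (cycleGraph (k i)).neighborSet j = (cycleGraph (k i)).neighborSet j' ∧
      (coneCyclesBase k q s).neighborSet a = {b, d} := by
  obtain ⟨i, j, rfl, hNa⟩ := coneCyclesBase_neighborSet_eq_pair hk hab had hbd
  obtain ⟨i', j', rfl, hNc⟩ := coneCyclesBase_neighborSet_eq_pair hk hcb hcd hbd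
  have hb : b ∈ (coneCyclesBase k q s).neighborSet (.inl ⟨i, j⟩) := hab
  rw [coneCyclesBase_neighborSet_inl] at hb
  obtain ⟨x, -, rfl⟩ := hb
  have hb' : .inl ⟨i, x⟩ ∈ (coneCyclesBase k q s).neighborSet (.inl ⟨i', j'⟩) := hcb
  rw [coneCyclesBase_neighborSet_inl] at hb'
  obtain ⟨y, -, hy⟩ := hb'
  obtain rfl : i = i' := (Sigma.mk.inj_iff.1 (Sum.inl_injective hy)).1.symm
  refine ⟨i, j, j', rfl, rfl, fun h => hac (h ▸ rfl), ?_, hNa⟩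
  have := hNa.trans hNc.symm
  rw [coneCyclesBase_neighborSet_inl, coneCyclesBase_neighborSet_inl] at this
  exact Set.image_injective.2 (fun _ _ h => by simpa using h) this

variable (k q s) in
def apexSquare (hk : ∀ i, 3 ≤ k i) (i : Fin t) (j : Fin (k i)) :
    Copy (cycleGraph 4) (coneCycles k q s) :=
  haveI : NeZero (k i) := ⟨by have := hk i; omega⟩
  Copy.cycleGraphFour (a := none) (b := cycleEmbedding k q s i (j - 1))
    (c := cycleEmbedding k q s i j) (d := cycleEmbedding k q s i (j + 1)) trivial
    ((cycleEmbedding k q s i).map_adj_iff.2 (cycleGraph_sub_one_adj (by have := hk i; omega) j))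
    ((cycleEmbedding k q s i).map_adj_iff.2 (cycleGraph_adj_add_one (by have := hk i; omega) j))
    trivial (Option.some_ne_none _).symm
    ((cycleEmbedding k q s i).injective.ne (cycleGraph_sub_one_ne_add_one (hk i) j))

variable (k q s) in
def componentSquare (i : Fin t) (h : k i = 4) : Copy (cycleGraph 4) (coneCycles k q s) :=
  (cycleEmbedding k q s i).toCopy.comp (cycleGraphCongr h.symm).toCopy

theorem apexSquare_isCompleteBipartiteWith (hk : ∀ i, 3 ≤ k i) (i : Fin t) (j : Fin (k i)) :
    (apexSquare k q s hk i j).toSubgraph.IsCompleteBipartiteWith {none, cycleEmbedding k q s i j}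
      (cycleEmbedding k q s i '' (cycleGraph (k i)).neighborSet j) := by
  have : NeZero (k i) := ⟨by have := hk i; omega⟩
  rw [cycleGraph_neighborSet_eq_pair (by have := hk i; omega), Set.image_pair]
  exact (apexSquare k q s hk i j).toSubgraph_isCompleteBipartiteWith

theorem componentSquare_isCompleteBipartiteWith (i : Fin t) (h : k i = 4) :
    (componentSquare k q s i h).toSubgraph.IsCompleteBipartiteWith
      (cycleEmbedding k q s i '' {Fin.cast h.symm 0, Fin.cast h.symm 2})
      (cycleEmbedding k q s i '' {Fin.cast h.symm 1, Fin.cast h.symm 3}) := by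
  rw [Set.image_pair, Set.image_pair]
  exact (componentSquare k q s i h).toSubgraph_isCompleteBipartiteWith

theorem exists_apexSquare_eq (hk : ∀ i, 3 ≤ k i) (f : Copy (cycleGraph 4) (coneCycles k q s))
    (hf : f 0 = none) : ∃ i j, (apexSquare k q s hk i j).toSubgraph = f.toSubgraph := by
  have hsome : ∀ x ≠ 0, ∃ v, f x = some v := fun x hx =>
    Option.ne_none_iff_exists'.1 fun h => hx (f.injective (h.trans hf.symm))
  obtain ⟨b, hb⟩ := hsome 1 (by decide)
  obtain ⟨c, hc⟩ := hsome 2 (by decide)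
  obtain ⟨d, hd⟩ := hsome 3 (by decide)
  have hcb := f.toHom.map_adj (by decide : (cycleGraph 4).Adj 2 1)
  have hcd := f.toHom.map_adj (by decide : (cycleGraph 4).Adj 2 3)
  rw [Copy.coe_toHom, hb, hc] at hcb
  rw [Copy.coe_toHom, hc, hd] at hcd
  have hbd : b ≠ d := fun h => absurd (f.injective (hb.trans (h ▸ hd.symm))) (by decide)
  obtain ⟨i, j, rfl, hN⟩ := coneCyclesBase_neighborSet_eq_pair hk hcb hcd hbd
  refine ⟨i, j, (apexSquare_isCompleteBipartiteWith hk i j).eq ?_⟩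
  have hQ : ({some b, some d} : Set _) =
      cycleEmbedding k q s i '' (cycleGraph (k i)).neighborSet j := by
    rw [← Set.image_pair, ← hN, coneCyclesBase_neighborSet_inl, Set.image_image]
    rfl
  have hS := f.toSubgraph_isCompleteBipartiteWith
  rwa [hf, hb, hc, hd, hQ] at hS

theorem exists_componentSquare_eq (hk : ∀ i, 3 ≤ k i)
    (f : Copy (cycleGraph 4) (coneCyclesBase k q s)) :
    ∃ i h, (componentSquare k q s i h).toSubgraph =
      ((coneEmbedding _).toCopy.comp f).toSubgraph := by
  have hab := f.toHom.map_adj (by decide : (cycleGraph 4).Adj 0 1)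
  have hbc := f.toHom.map_adj (by decide : (cycleGraph 4).Adj 1 2)
  have hcd := f.toHom.map_adj (by decide : (cycleGraph 4).Adj 2 3)
  have hda := f.toHom.map_adj (by decide : (cycleGraph 4).Adj 3 0)
  have hac : f 0 ≠ f 2 := f.injective.ne (by decide)
  have hbd : f 1 ≠ f 3 := f.injective.ne (by decide)
  have hS : ((coneEmbedding _).toCopy.comp f).toSubgraph.IsCompleteBipartiteWith
      {some (f 0), some (f 2)} {some (f 1), some (f 3)} :=
    Copy.toSubgraph_isCompleteBipartiteWith _
  generalize ((coneEmbedding _).toCopy.comp f).toSubgraph = S at hS ⊢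
  simp only [Copy.coe_toHom] at hab hbc hcd hda
  generalize f 0 = a, f 1 = b, f 2 = c, f 3 = d at *
  obtain ⟨i, j, j', rfl, rfl, hjj', hN, hNa⟩ :=
    coneCyclesBase_eq_inl_of_common_neighbors hk hab hda.symm hbc.symm hcd hac hbd
  have h4 := cycleGraph_eq_four_of_neighborSet_eq (hk i) hjj' hN
  refine ⟨i, h4, (componentSquare_isCompleteBipartiteWith i h4).eq ?_⟩
  have hP : ({some (.inl ⟨i, j⟩), some (.inl ⟨i, j'⟩)} : Set _) =
      cycleEmbedding k q s i '' {j, j'} := by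
    rw [Set.image_pair]
    rfl
  have hQ : ({some b, some d} : Set _) =
      cycleEmbedding k q s i '' (cycleGraph (k i)).neighborSet j := by
    rw [← Set.image_pair, ← hNa, coneCyclesBase_neighborSet_inl, Set.image_image]
    rfl
  rw [hP, hQ] at hS
  rcases cycleGraph_four_parts_of_neighborSet_eq h4.symm hjj' hN with ⟨h1, h2⟩ | ⟨h1, h2⟩
  · rwa [h1, h2] at hS
  · rw [h1, h2] at hS
    exact hS.symm

variable (k q s) in
def squareSubgraph (hk : ∀ i, 3 ≤ k i) : (Σ i, Fin (k i)) ⊕ {i // k i = 4} →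
    {S : (coneCycles k q s).Subgraph // Nonempty (S.coe ≃g cycleGraph 4)}
  | .inl ⟨i, j⟩ => ⟨_, ⟨(apexSquare k q s hk i j).isoToSubgraph.symm⟩⟩
  | .inr ⟨i, h⟩ => ⟨_, ⟨(componentSquare k q s i h).isoToSubgraph.symm⟩⟩

theorem squareSubgraph_surjective (hk : ∀ i, 3 ≤ k i) :
    Function.Surjective (squareSubgraph k q s hk) := by
  rintro ⟨S, hS⟩
  obtain ⟨f, rfl⟩ : S ∈ Set.range Copy.toSubgraph := by
    rw [Copy.range_toSubgraph]
    exact ⟨hS.some.symm⟩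
  by_cases hnone : ∃ m, f m = none
  · obtain ⟨m, hm⟩ := hnone
    obtain ⟨i, j, hij⟩ := exists_apexSquare_eq hk (f.comp (cycleGraphFourRotate m).toCopy)
      (by simpa [Copy.comp_apply, cycleGraphFourRotate] using hm)
    exact ⟨.inl ⟨i, j⟩, Subtype.ext (hij.trans (f.toSubgraph_comp_iso _))⟩
  · obtain ⟨f, rfl⟩ := exists_comp_coneEmbedding f (not_exists.1 hnone)
    obtain ⟨i, h, hi⟩ := exists_componentSquare_eq hk f
    exact ⟨.inr ⟨i, h⟩, Subtype.ext hi⟩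

theorem none_mem_apexSquare_verts (hk : ∀ i, 3 ≤ k i) (i : Fin t) (j : Fin (k i)) :
    none ∈ (apexSquare k q s hk i j).toSubgraph.verts := by
  rw [(apexSquare_isCompleteBipartiteWith hk i j).1]
  exact Or.inl (Or.inl rfl)

theorem none_notMem_componentSquare_verts (i : Fin t) (h : k i = 4) :
    none ∉ (componentSquare k q s i h).toSubgraph.verts := by
  rw [(componentSquare_isCompleteBipartiteWith i h).1]
  simp

theorem eq_of_apexSquare_toSubgraph_eq (hk : ∀ i, 3 ≤ k i) {i i' : Fin t} {j : Fin (k i)}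
    {j' : Fin (k i')}
    (heq : (apexSquare k q s hk i j).toSubgraph = (apexSquare k q s hk i' j').toSubgraph) :
    (⟨i, j⟩ : Σ i, Fin (k i)) = ⟨i', j'⟩ := by
  have hS := apexSquare_isCompleteBipartiteWith (q := q) (s := s) hk i j
  have hS' := apexSquare_isCompleteBipartiteWith (q := q) (s := s) hk i' j'
  rw [heq] at hS
  have hmem : cycleEmbedding k q s i j ∈ (apexSquare k q s hk i' j').toSubgraph.verts := by
    rw [hS.1]
    exact Or.inl (Or.inr rfl)
  have hnadj : ¬(apexSquare k q s hk i' j').toSubgraph.Adj none (cycleEmbedding k q s i j) := by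
    rw [hS.2]
    simp
  rw [hS'.1] at hmem
  rcases hmem with (h | h) | h
  · simp at h
  · simpa using h
  · exact absurd ((hS'.2 _ _).2 (Or.inl ⟨Or.inl rfl, h⟩)) hnadj

theorem eq_of_componentSquare_toSubgraph_eq {i i' : Fin t} {h : k i = 4} {h' : k i' = 4}
    (heq : (componentSquare k q s i h).toSubgraph = (componentSquare k q s i' h').toSubgraph) :
    i = i' := by
  have hmem : cycleEmbedding k q s i (Fin.cast h.symm 0) ∈
      (componentSquare k q s i' h').toSubgraph.verts := by
    rw [← heq, (componentSquare_isCompleteBipartiteWith i h).1]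
    exact Or.inl ⟨_, Or.inl rfl, rfl⟩
  rw [(componentSquare_isCompleteBipartiteWith i' h').1] at hmem
  obtain ⟨x, -, hx⟩ | ⟨x, -, hx⟩ := hmem <;>
  · simp only [cycleEmbedding_apply, Option.some.injEq, Sum.inl.injEq, Sigma.mk.inj_iff] at hx
    exact hx.1.symm

theorem squareSubgraph_injective (hk : ∀ i, 3 ≤ k i) :
    Function.Injective (squareSubgraph k q s hk) := by
  rintro (⟨i, j⟩ | ⟨i, h⟩) (⟨i', j'⟩ | ⟨i', h'⟩) heq <;>
    simp only [squareSubgraph, Subtype.mk.injEq] at heq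
  · rw [eq_of_apexSquare_toSubgraph_eq hk heq]
  · exact (none_notMem_componentSquare_verts i' h' (heq ▸ none_mem_apexSquare_verts hk i j)).elim
  · exact (none_notMem_componentSquare_verts i h (heq ▸ none_mem_apexSquare_verts hk i' j')).elim
  · obtain rfl := eq_of_componentSquare_toSubgraph_eq heq
    rfl

theorem subgraphCount_coneCycles_cycleGraph_four (hk : ∀ i, 3 ≤ k i) :
    subgraphCount (coneCycles k q s) (cycleGraph 4) = ∑ i, k i + #{i | k i = 4} := by
  rw [subgraphCount, ← Nat.card_congr (Equiv.ofBijective _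
    ⟨squareSubgraph_injective hk, squareSubgraph_surjective hk⟩)]
  simp [Nat.card_eq_fintype_card, Fintype.card_subtype]

theorem subgraphCount_C4_coneCycles_general
    (t q s n : ℕ)
    (k : Fin t → ℕ) (hk : ∀ i, 3 ≤ k i)
    (hn : n = Fintype.card (Option ((Σ i, Fin (k i)) ⊕ ((Σ _ : Fin q, Fin 2) ⊕ Fin s)))) :
    (subgraphCount (coneCycles k q s) (cycleGraph 4) : ℤ) =
      (n : ℤ) - 2 * (q : ℤ) - (s : ℤ) - 1
        + ((Finset.univ.filter fun i => k i = 4).card : ℤ) ∧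
    ((∀ i, k i ≠ 4) →
      (subgraphCount (coneCycles k q s) (cycleGraph 4) : ℤ) =
        (n : ℤ) - 2 * (q : ℤ) - (s : ℤ) - 1) := by
  have hcount : (subgraphCount (coneCycles k q s) (cycleGraph 4) : ℤ) =
      (n : ℤ) - 2 * (q : ℤ) - (s : ℤ) - 1 + #{i | k i = 4} := by
    rw [subgraphCount_coneCycles_cycleGraph_four hk, hn]
    simp only [Fintype.card_option, Fintype.card_sum, Fintype.card_sigma, Fintype.card_fin,
      sum_const, card_univ, smul_eq_mul]
    push_cast
    ring
  refine ⟨hcount, fun hno => ?_⟩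
  rw [hcount, Finset.filter_false_of_mem fun i _ => hno i, Finset.card_empty]
  simp

/-- Lemma 4.2 (ii): the number of subgraphs of `G = K₁ ∨ (C_{k₁} ∪ ⋯ ∪ C_{k_t} ∪ q K₂ ∪ s K₁)`
isomorphic to `C₄` equals `n - 2q - s - 1 + |{i : k_i = 4}|`; in particular it equals
`n - 2q - s - 1` when no `k_i` equals `4`. -/
theorem subgraphCount_C4_coneCycles
    (t q s n : ℕ) (ht : 1 ≤ t) (hq : 1 ≤ q) (hs : 1 ≤ s)
    (k : Fin t → ℕ) (hk : ∀ i, 3 ≤ k i)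
    (hn : n = Fintype.card (Option ((Σ i, Fin (k i)) ⊕ ((Σ _ : Fin q, Fin 2) ⊕ Fin s)))) :
    (subgraphCount (coneCycles k q s) (cycleGraph 4) : ℤ) =
      (n : ℤ) - 2 * (q : ℤ) - (s : ℤ) - 1
        + ((Finset.univ.filter fun i => k i = 4).card : ℤ) ∧
    ((∀ i, k i ≠ 4) →
      (subgraphCount (coneCycles k q s) (cycleGraph 4) : ℤ) =
        (n : ℤ) - 2 * (q : ℤ) - (s : ℤ) - 1) :=
  subgraphCount_C4_coneCycles_general t q s n k hk hn

end Paper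
end
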